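/- Let N ≥ 2 be an integer, r > 0 and ν ∈ ℝ. Define X_j(s,t) = r·e^{−2i(ν² − (N−1)/r²) t}·e^{i s ν}·e^{2πi(j−1)/N} for j = 1,…,N. Then X_j(s,t) ≠ X_k(s,t) for all j ≠ k, and the family (X₁,…,X_N) solves the Klein–Majda–Damodaran system with all circulations κ_j = 2 and all α_j = 1, i.e. ∂_t X_j = 2i ∂_s² X_j + 2i Σ_{k≠j} 2 (X_j − X_k)/|X_j − X_k|² for every j, s, t. -/

import Mathlib

/-!
Write `ψ j = e^{2πij/N}`, an injective additive character of `Fin N`. Then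
`X_j = X_0 ψ(j)` with `|X_0| = r`, and `(X_j - X_k)/|X_j - X_k|² = 1 / conj (X_j - X_k)`.
Since `conj ψ = ψ⁻¹`, the interaction sum reduces to `X_j / r²` times
`∑_{ζ^N = 1, ζ ≠ 1} 1/(1 - ζ) = (N - 1)/2`, which one sees by pairing `ζ` with `ζ⁻¹`.
Both derivatives act by multiplication, `∂ₜ` by `-2i(ν² - (N-1)/r²)` and `∂ₛ²` by `-ν²`,
so the equation reduces to an identity between these scalars.
-/

open Filter Finset

noncomputable section

/-- The helical polygon family
`X_j(s,t) = r e^{−2i(ν² − (N−1)/r²)t} e^{isν} e^{2πi(j−1)/N}`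
(indices `j : Fin N` represent `j+1`). -/
def helixFamily (N : ℕ) (r ν : ℝ) (j : Fin N) (s t : ℝ) : ℂ :=
  (r : ℂ)
    * Complex.exp (-2 * Complex.I * (((ν ^ 2 - ((N : ℝ) - 1) / r ^ 2 : ℝ)) : ℂ) * (t : ℂ))
    * Complex.exp (Complex.I * (s : ℂ) * (ν : ℂ))
    * Complex.exp (2 * (Real.pi : ℂ) * Complex.I * ((j : ℕ) : ℂ) / (N : ℂ))

namespace AddChar

variable {G K : Type*} [AddCommGroup G] [Fintype G] [DecidableEq G]

theorem two_mul_sum_inv_one_sub [Field K] (ψ : AddChar G K) (hψ : Function.Injective ψ) :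
    2 * ∑ a ∈ univ.erase 0, (1 - ψ a)⁻¹ = Fintype.card G - 1 := by
  have pair : ∀ a ∈ univ.erase 0, (1 - ψ a)⁻¹ + (1 - ψ (-a))⁻¹ = 1 := by
    intro a ha
    have h1 : ψ a ≠ 1 := by
      rw [← ψ.map_zero_eq_one, hψ.ne_iff]; exact (mem_erase.mp ha).1
    have h0 : ψ a ≠ 0 := (ψ.val_isUnit a).ne_zero
    rw [map_neg_eq_inv]
    field_simp [sub_ne_zero.mpr h1, sub_ne_zero.mpr h1.symm]
    ring
  have reflect : ∑ a ∈ univ.erase 0, (1 - ψ (-a))⁻¹ = ∑ a ∈ univ.erase 0, (1 - ψ a)⁻¹ :=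
    sum_equiv (Equiv.neg G) (by simp) (by simp)
  calc 2 * ∑ a ∈ univ.erase 0, (1 - ψ a)⁻¹
      = ∑ a ∈ univ.erase 0, ((1 - ψ a)⁻¹ + (1 - ψ (-a))⁻¹) := by
        rw [sum_add_distrib, reflect, two_mul]
    _ = ∑ a ∈ univ.erase (0 : G), (1 : K) := sum_congr rfl pair
    _ = Fintype.card G - 1 := by simp [sum_erase_eq_sub (mem_univ _)]

theorem sum_inv_conj_sub [RCLike K] (ψ : AddChar G K) (hψ : Function.Injective ψ) (a : G) :
    ∑ b ∈ univ.erase a, (starRingEnd K (ψ a - ψ b))⁻¹ = (Fintype.card G - 1) / 2 * ψ a := by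
  have shift : ∑ b ∈ univ.erase a, (starRingEnd K (ψ a - ψ b))⁻¹
      = ∑ c ∈ univ.erase 0, ψ a * (1 - ψ c)⁻¹ := by
    refine sum_equiv (Equiv.subLeft a) (by simp [sub_eq_zero, eq_comm]) fun b _ => ?_
    rw [Equiv.subLeft_apply, map_sub, ← inv_apply_eq_conj, ← inv_apply_eq_conj, map_sub_eq_div]
    have hb : ψ b ≠ 0 := (ψ.val_isUnit b).ne_zero
    rw [inv_sub_inv (ψ.val_isUnit a).ne_zero hb, inv_div, one_sub_div hb, inv_div,
      mul_div_assoc']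
  rw [shift, ← mul_sum, ← two_mul_sum_inv_one_sub ψ hψ]
  ring

theorem sum_sub_div_norm_sq_of_eq_mul (ψ : AddChar G ℂ) (hψ : Function.Injective ψ)
    {X : G → ℂ} {z : ℂ} (hX : ∀ b, X b = z * ψ b) (a : G) :
    ∑ b ∈ univ.erase a, (X a - X b) / ((‖X a - X b‖ : ℝ) : ℂ) ^ 2
      = (Fintype.card G - 1) / (2 * ((‖z‖ : ℝ) : ℂ) ^ 2) * X a := by
  have div_norm_sq : ∀ w : ℂ, w / ((‖w‖ : ℝ) : ℂ) ^ 2 = (starRingEnd ℂ w)⁻¹ := fun w => by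
    rw [RCLike.inv_def, RCLike.conj_conj, RCLike.norm_conj, div_eq_mul_inv]
    push_cast
    rfl
  simp_rw [div_norm_sq, hX, ← mul_sub, map_mul, mul_inv, ← mul_sum, sum_inv_conj_sub ψ hψ,
    ← div_norm_sq]
  ring

end AddChar

namespace Fin

def stdAddChar (N : ℕ) [NeZero N] : AddChar (Fin N) ℂ :=
  ZMod.stdAddChar.compAddMonoidHom (.mk' (ZMod.finEquiv N) (map_add _))

variable {N : ℕ} [NeZero N]

theorem stdAddChar_apply (j : Fin N) :
    stdAddChar N j = Complex.exp (2 * Real.pi * Complex.I * (j : ℕ) / N) := by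
  have finEquiv_eq : ZMod.finEquiv N j = ((j : ℕ) : ZMod N) := by
    obtain ⟨n, rfl⟩ : ∃ n, N = n + 1 := Nat.exists_eq_succ_of_ne_zero (NeZero.ne N)
    exact (cast_val_eq_self j).symm
  rw [stdAddChar, AddChar.compAddMonoidHom_apply, AddMonoidHom.mk'_apply, finEquiv_eq,
    ZMod.stdAddChar_apply, ZMod.toCircle_natCast]

theorem injective_stdAddChar : Function.Injective (stdAddChar N) :=
  ZMod.injective_stdAddChar.comp (ZMod.finEquiv N).injective

end Fin

open Complex

section helixFamily

variable {N : ℕ} {r ν : ℝ}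

theorem norm_helixFamily (hr : 0 ≤ r) (j : Fin N) (s t : ℝ) : ‖helixFamily N r ν j s t‖ = r := by
  simp [helixFamily, norm_exp, abs_of_nonneg hr, -ofReal_sub, -ofReal_div, -ofReal_pow]

theorem helixFamily_eq_mul_stdAddChar [NeZero N] (j : Fin N) (s t : ℝ) :
    helixFamily N r ν j s t = helixFamily N r ν 0 s t * Fin.stdAddChar N j := by
  simp [helixFamily, Fin.stdAddChar_apply]

theorem hasDerivAt_helixFamily_time (j : Fin N) (s t : ℝ) :
    HasDerivAt (fun τ => helixFamily N r ν j s τ)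
      (-2 * I * ((ν ^ 2 - ((N : ℝ) - 1) / r ^ 2 : ℝ) : ℂ) * helixFamily N r ν j s t) t := by
  refine ((((hasDerivAt_id' t).ofReal_comp.const_mul _).cexp.const_mul (r : ℂ)).mul_const
    _ |>.mul_const _).congr_deriv ?_
  rw [helixFamily]
  push_cast
  ring

theorem hasDerivAt_helixFamily_space (j : Fin N) (s t : ℝ) :
    HasDerivAt (fun σ => helixFamily N r ν j σ t) (I * ν * helixFamily N r ν j s t) s := by
  refine ((((hasDerivAt_id' s).ofReal_comp.const_mul I).mul_const (ν : ℂ)).cexp.const_mul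
    _ |>.mul_const _).congr_deriv ?_
  rw [helixFamily]
  push_cast
  ring

theorem deriv_helixFamily_space (j : Fin N) (t : ℝ) :
    deriv (fun σ => helixFamily N r ν j σ t) = fun σ => I * ν * helixFamily N r ν j σ t :=
  funext fun s => (hasDerivAt_helixFamily_space j s t).deriv

end helixFamily

theorem helix_family_solves_KMD_general
    (N : ℕ) (r : ℝ) (hr : 0 < r) (ν : ℝ) :
    (∀ (j k : Fin N) (s t : ℝ), j ≠ k → helixFamily N r ν j s t ≠ helixFamily N r ν k s t) ∧
    (∀ (j : Fin N) (s t : ℝ),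
      deriv (fun τ => helixFamily N r ν j s τ) t
        = 2 * Complex.I * deriv (fun σ => deriv (fun σ' => helixFamily N r ν j σ' t) σ) s
          + 2 * Complex.I * ∑ k ∈ Finset.univ.erase j,
              (2 : ℂ) * (helixFamily N r ν j s t - helixFamily N r ν k s t)
                / ((‖helixFamily N r ν j s t - helixFamily N r ν k s t‖ : ℝ) : ℂ) ^ 2) := by
  rcases N.eq_zero_or_pos with rfl | hN
  · exact ⟨fun j => j.elim0, fun j => j.elim0⟩
  have : NeZero N := ⟨hN.ne'⟩
  have hX0 : ∀ s t, helixFamily N r ν 0 s t ≠ 0 := fun s t h => by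
    simpa [h, hr.ne] using norm_helixFamily (N := N) (ν := ν) hr.le 0 s t
  refine ⟨fun j k s t hjk heq => hjk (Fin.injective_stdAddChar ?_), fun j s t => ?_⟩
  · rw [helixFamily_eq_mul_stdAddChar j, helixFamily_eq_mul_stdAddChar k] at heq
    exact mul_left_cancel₀ (hX0 s t) heq
  · have hsum := AddChar.sum_sub_div_norm_sq_of_eq_mul _ Fin.injective_stdAddChar
      (fun k => helixFamily_eq_mul_stdAddChar (r := r) (ν := ν) k s t) j
    simp_rw [mul_div_assoc, ← mul_sum, hsum, norm_helixFamily hr.le, Fintype.card_fin,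
      (hasDerivAt_helixFamily_time j s t).deriv, deriv_helixFamily_space,
      ((hasDerivAt_helixFamily_space j s t).const_mul _).deriv]
    push_cast
    linear_combination (-2 * I * ν ^ 2 * helixFamily N r ν j s t) * I_sq

/-- **The rotating polygonal family of helices solves the Klein–Majda–Damodaran system**
with all circulations `κ_j = 2` and all core constants `α_j = 1`: the helices remain
pairwise disjoint and
`∂ₜ X_j = 2i ∂ₛ² X_j + 2i ∑_{k ≠ j} 2 (X_j − X_k)/|X_j − X_k|²`. -/
theorem helix_family_solves_KMD
    (N : ℕ) (hN : 2 ≤ N) (r : ℝ) (hr : 0 < r) (ν : ℝ) :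
    (∀ (j k : Fin N) (s t : ℝ), j ≠ k → helixFamily N r ν j s t ≠ helixFamily N r ν k s t) ∧
    (∀ (j : Fin N) (s t : ℝ),
      deriv (fun τ => helixFamily N r ν j s τ) t
        = 2 * Complex.I * deriv (fun σ => deriv (fun σ' => helixFamily N r ν j σ' t) σ) s
          + 2 * Complex.I * ∑ k ∈ Finset.univ.erase j,
              (2 : ℂ) * (helixFamily N r ν j s t - helixFamily N r ν k s t)
                / ((‖helixFamily N r ν j s t - helixFamily N r ν k s t‖ : ℝ) : ℂ) ^ 2) :=
  helix_family_solves_KMD_general N r hr ν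

end
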